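/- Augmentation updates reducible pairs as follows: for N on X ⊆ [n], i ≠ j, j ∈ X, and N' = ^{(i,j)}N, a pair (x,y) with x ≠ y is reducible in N' exactly when one of: (1) (x,y) ∈ RP(N) and {x,y} ∩ {i,j} = ∅, with unchanged character; (2) (x,y) ∈ RP(N), x = i, y ≠ j, and (x,y) is a cherry of N, becoming a reticulated cherry of N'; (3) (x,y) = (i,j), which is a cherry of N' if i ∉ X and a reticulated cherry if i ∈ X; (4) (x,y) = (j,i) with i ∉ X, a cherry of N'. -/
import Mathlib


/-- A directed graph with node set `V ⊆ ℕ` and arc set `A`.  Leaves are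
identified with their taxon labels (natural numbers). -/
structure Net where
  V : Finset ℕ
  A : Finset (ℕ × ℕ)

namespace Net

def indeg (N : Net) (v : ℕ) : ℕ := (N.A.filter (fun a => a.2 = v)).card
def outdeg (N : Net) (v : ℕ) : ℕ := (N.A.filter (fun a => a.1 = v)).card

def isLeaf (N : Net) (v : ℕ) : Prop := v ∈ N.V ∧ N.indeg v = 1 ∧ N.outdeg v = 0
def isRoot (N : Net) (v : ℕ) : Prop := v ∈ N.V ∧ N.indeg v = 0 ∧ N.outdeg v = 1
def isTreeNode (N : Net) (v : ℕ) : Prop := v ∈ N.V ∧ N.indeg v = 1 ∧ N.outdeg v = 2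
def isRetic (N : Net) (v : ℕ) : Prop := v ∈ N.V ∧ N.indeg v = 2 ∧ N.outdeg v = 1

/-- The set of leaves (= taxa) of a network. -/
def leaves (N : Net) : Finset ℕ := N.V.filter (fun v => N.indeg v = 1 ∧ N.outdeg v = 0)

/-- Number of reticulation nodes. -/
def numRetic (N : Net) : ℕ := (N.V.filter (fun v => N.indeg v = 2 ∧ N.outdeg v = 1)).card

/-- `N` is a rooted binary phylogenetic network: arcs join nodes, it is acyclic,
has a unique root, and every node is a root, leaf, tree node or reticulation. -/
def isPhylo (N : Net) : Prop :=
  (∀ a ∈ N.A, a.1 ∈ N.V ∧ a.2 ∈ N.V) ∧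
  (∀ v, ¬ Relation.TransGen (fun u w => (u, w) ∈ N.A) v v) ∧
  (∃! r, N.isRoot r) ∧
  (∀ v ∈ N.V, N.isRoot v ∨ N.isLeaf v ∨ N.isTreeNode v ∨ N.isRetic v)

/-- `(i,j)` is a cherry: `i ≠ j` are leaves with a common parent. -/
def isCherry (N : Net) (i j : ℕ) : Prop :=
  i ≠ j ∧ N.isLeaf i ∧ N.isLeaf j ∧ ∃ p, (p, i) ∈ N.A ∧ (p, j) ∈ N.A

/-- `(i,j)` is a reticulated cherry: the parent of `i` is a reticulation,
the parent of `j` is a tree node and a parent of the parent of `i`. -/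
def isRetCherry (N : Net) (i j : ℕ) : Prop :=
  i ≠ j ∧ N.isLeaf i ∧ N.isLeaf j ∧
    ∃ pi pj, (pi, i) ∈ N.A ∧ (pj, j) ∈ N.A ∧
      N.isRetic pi ∧ N.isTreeNode pj ∧ (pj, pi) ∈ N.A

/-- `(i,j)` is a reducible pair. -/
def Reducible (N : Net) (s : ℕ × ℕ) : Prop := N.isCherry s.1 s.2 ∨ N.isRetCherry s.1 s.2

end Net

/-- The reduction of a cherry `(i,j)`: delete leaf `i` and simplify the
(now elementary) common parent `p`, whose parent is `g`. -/
def CherryReduce (N : Net) (i j : ℕ) (N' : Net) : Prop :=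
  ∃ p g, (p, i) ∈ N.A ∧ (p, j) ∈ N.A ∧ (g, p) ∈ N.A ∧
    N'.V = (N.V.erase i).erase p ∧
    N'.A = (N.A \ {(p, i), (p, j), (g, p)}) ∪ {(g, j)}

/-- The reduction of a reticulated cherry `(i,j)`: delete the arc from the parent
`pj` of `j` to the parent `pi` of `i`, and simplify the two elementary nodes. -/
def RetCherryReduce (N : Net) (i j : ℕ) (N' : Net) : Prop :=
  ∃ pi pj q g, (pi, i) ∈ N.A ∧ (pj, j) ∈ N.A ∧ (pj, pi) ∈ N.A ∧
    (q, pi) ∈ N.A ∧ q ≠ pj ∧ (g, pj) ∈ N.A ∧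
    N'.V = (N.V.erase pi).erase pj ∧
    N'.A = (N.A \ {(pj, pi), (q, pi), (pi, i), (g, pj), (pj, j)}) ∪ {(q, i), (g, j)}

/-- `N'` is the reduction `N^{(i,j)}` of the reducible pair `s = (i,j)` in `N`. -/
def Reduces (N : Net) (s : ℕ × ℕ) (N' : Net) : Prop :=
  (N.isCherry s.1 s.2 ∧ CherryReduce N s.1 s.2 N') ∨
  (N.isRetCherry s.1 s.2 ∧ RetCherryReduce N s.1 s.2 N')

/-- `N'` is the result of reducing in `N` the pairs of the sequence `S`, from left to right. -/
inductive ReducesSeq : Net → List (ℕ × ℕ) → Net → Prop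
  | nil (N : Net) : ReducesSeq N [] N
  | cons {N M N' : Net} {s : ℕ × ℕ} {S : List (ℕ × ℕ)} :
      Reduces N s M → ReducesSeq M S N' → ReducesSeq N (s :: S) N'

/-- `N` is the trivial network `I l` (a root and the leaf `l`). -/
def isTrivial (N : Net) (l : ℕ) : Prop :=
  ∃ r, r ≠ l ∧ N.V = {r, l} ∧ N.A = {(r, l)}

/-- `S` is a complete reducible sequence for `N`. -/
def CompleteRS (N : Net) (S : List (ℕ × ℕ)) : Prop :=
  ∃ N' l, ReducesSeq N S N' ∧ isTrivial N' l

/-- `N` is an orchard network. -/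
def Net.isOrchard (N : Net) : Prop := N.isPhylo ∧ ∃ S, CompleteRS N S

/-- Isomorphism of networks: an arc-preserving and arc-reflecting bijection
of the nodes which is the identity on the leaves. -/
def NetIso (N N' : Net) : Prop :=
  ∃ φ : ℕ → ℕ, Set.BijOn φ ↑N.V ↑N'.V ∧
    (∀ u ∈ N.V, ∀ v ∈ N.V, ((u, v) ∈ N.A ↔ (φ u, φ v) ∈ N'.A)) ∧
    ∀ l ∈ N.leaves, φ l = l

/-- Augmentation of `(i,j)` when `i` is a new taxon: create a new leaf `i`,
subdivide the arc `(q,j)` into `j` with a new node `p`, and add the arc `(p,i)`. -/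
def CherryAug (N : Net) (i j : ℕ) (N' : Net) : Prop :=
  ∃ q p, (q, j) ∈ N.A ∧ i ∉ N.V ∧ p ∉ N.V ∧ p ≠ i ∧
    N'.V = insert i (insert p N.V) ∧
    N'.A = (N.A.erase (q, j)) ∪ {(q, p), (p, j), (p, i)}

/-- Augmentation of `(i,j)` when `i` is already a leaf: subdivide the arcs into
`i` and `j` with new nodes `pi`, `pj` and add the arc `(pj, pi)`. -/
def RetAug (N : Net) (i j : ℕ) (N' : Net) : Prop :=
  ∃ qi qj pi pj, (qi, i) ∈ N.A ∧ (qj, j) ∈ N.A ∧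
    pi ∉ N.V ∧ pj ∉ N.V ∧ pi ≠ pj ∧
    N'.V = insert pi (insert pj N.V) ∧
    N'.A = ((N.A.erase (qi, i)).erase (qj, j)) ∪
      {(qi, pi), (pi, i), (qj, pj), (pj, j), (pj, pi)}

/-- `N'` is the augmentation `^{(i,j)}N` of the pair `s = (i,j)` in `N`. -/
def Augments (N : Net) (s : ℕ × ℕ) (N' : Net) : Prop :=
  s.1 ≠ s.2 ∧ N.isLeaf s.2 ∧
    ((s.1 ∉ N.leaves ∧ CherryAug N s.1 s.2 N') ∨
     (s.1 ∈ N.leaves ∧ RetAug N s.1 s.2 N'))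

/-- The total order on pairs: `(i,j) ≤ (i',j')` iff `i < i'` or (`i = i'` and `j ≤ j'`). -/
def pairLE (p q : ℕ × ℕ) : Prop := p.1 < q.1 ∨ (p.1 = q.1 ∧ p.2 ≤ q.2)

/-- Strict version of `pairLE`. -/
def pairLT (p q : ℕ × ℕ) : Prop := p.1 < q.1 ∨ (p.1 = q.1 ∧ p.2 < q.2)

/-- Lexicographic order on sequences of pairs (of the same length). -/
def seqLE : List (ℕ × ℕ) → List (ℕ × ℕ) → Prop
  | [], [] => True
  | p :: S, q :: S' => pairLT p q ∨ (p = q ∧ seqLE S S')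
  | _, _ => False

/-- `s` is the minimum reducible pair of `N`. -/
def isMRP (N : Net) (s : ℕ × ℕ) : Prop :=
  N.Reducible s ∧ ∀ t, N.Reducible t → pairLE s t

/-- `S` is the minimum complete reducible sequence of `N`. -/
def isMCRS (N : Net) (S : List (ℕ × ℕ)) : Prop :=
  CompleteRS N S ∧ ∀ S', CompleteRS N S' → seqLE S S'

/-- `N` is (isomorphic to) the network `^S I` generated by applying the
augmentations of `S`, from right to left, to a trivial network. -/
inductive Generates : List (ℕ × ℕ) → Net → Prop
  | triv {N : Net} {l : ℕ} : isTrivial N l → Generates [] N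
  | cons {s : ℕ × ℕ} {S : List (ℕ × ℕ)} {N N' : Net} :
      Generates S N → Augments N s N' → Generates (s :: S) N'

/-- `S` is a minimum augmentation sequence: `S = MCRS(^S I)`. -/
def isMinAugSeq (S : List (ℕ × ℕ)) : Prop :=
  ∃ N, Generates S N ∧ isMCRS N S

/-- `N` is tree-child: every internal node has a child that is not a reticulation. -/
def Net.isTreeChild (N : Net) : Prop :=
  ∀ v ∈ N.V, ¬ N.isLeaf v → ∃ c, (v, c) ∈ N.A ∧ ¬ N.isRetic c

/-- The possible states of a taxon in a network. -/
inductive LState | sN | sP | sS | sT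
deriving DecidableEq

open Classical in
/-- The state `σ_N(i)` of a taxon `i`: `sN` if `i` is not a leaf of `N`; otherwise
`sP` if its parent is a reticulation; otherwise `sS` if its sibling is a
reticulation; otherwise `sT`. -/
noncomputable def state (N : Net) (i : ℕ) : LState :=
  if ¬ N.isLeaf i then .sN
  else if ∃ p, (p, i) ∈ N.A ∧ N.isRetic p then .sP
  else if ∃ p s, (p, i) ∈ N.A ∧ (p, s) ∈ N.A ∧ s ≠ i ∧ N.isRetic s then .sS
  else .sT
namespace AugAux

open Net

lemma arc_mem_V {N : Net} (hph : N.isPhylo) {a : ℕ × ℕ} (ha : a ∈ N.A) :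
    a.1 ∈ N.V ∧ a.2 ∈ N.V := hph.1 a ha

lemma arc_ne {N : Net} (hph : N.isPhylo) {u v : ℕ} (ha : (u, v) ∈ N.A) : u ≠ v := by
  intro h; subst h
  exact hph.2.1 u (Relation.TransGen.single ha)

lemma in_unique {N : Net} {v u w : ℕ} (h1 : N.indeg v = 1)
    (hu : (u, v) ∈ N.A) (hw : (w, v) ∈ N.A) : w = u := by
  have h := Finset.card_le_one.mp (le_of_eq h1) (w, v)
    (by simp [Finset.mem_filter, hw]) (u, v) (by simp [Finset.mem_filter, hu])
  exact (Prod.mk.injEq _ _ _ _ ▸ h).1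

lemma in_filter_eq {N : Net} {v u : ℕ} (h1 : N.indeg v = 1)
    (hu : (u, v) ∈ N.A) : N.A.filter (fun a => a.2 = v) = {(u, v)} := by
  apply Finset.eq_singleton_iff_unique_mem.mpr
  refine ⟨by simp [Finset.mem_filter, hu], ?_⟩
  rintro ⟨w, v'⟩ hw
  simp only [Finset.mem_filter] at hw
  obtain ⟨hwA, hv'⟩ := hw
  subst hv'
  rw [in_unique h1 hu hwA]

lemma no_out {N : Net} {v w : ℕ} (h : N.outdeg v = 0) : (v, w) ∉ N.A := by
  intro hm
  have h0 := Finset.card_eq_zero.mp h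
  have : (v, w) ∈ N.A.filter (fun a => a.1 = v) := by simp [Finset.mem_filter, hm]
  rw [h0] at this; exact absurd this (Finset.notMem_empty _)

lemma fresh_no_src {N : Net} (hph : N.isPhylo) {p w : ℕ} (hp : p ∉ N.V) :
    (p, w) ∉ N.A := fun h => hp (arc_mem_V hph h).1

lemma fresh_no_tgt {N : Net} (hph : N.isPhylo) {p w : ℕ} (hp : p ∉ N.V) :
    (w, p) ∉ N.A := fun h => hp (arc_mem_V hph h).2

lemma tree_of_two_children {N : Net} (hph : N.isPhylo) {v a b : ℕ}
    (hA : (v, a) ∈ N.A) (hB : (v, b) ∈ N.A) (hab : a ≠ b) : N.isTreeNode v := by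
  have hv : v ∈ N.V := (arc_mem_V hph hA).1
  have h2 : 2 ≤ N.outdeg v := by
    have hs : ({(v, a), (v, b)} : Finset (ℕ × ℕ)) ⊆ N.A.filter (fun x => x.1 = v) := by
      intro x hx
      simp only [Finset.mem_insert, Finset.mem_singleton] at hx
      rcases hx with rfl | rfl <;> simp [Finset.mem_filter, hA, hB]
    have hc : ({(v, a), (v, b)} : Finset (ℕ × ℕ)).card = 2 := by
      rw [Finset.card_insert_of_notMem (by simp [hab]), Finset.card_singleton]
    calc 2 = _ := hc.symm
      _ ≤ _ := Finset.card_le_card hs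
  rcases hph.2.2.2 v hv with h | h | h | h
  · exact absurd h2 (by rw [h.2.2]; omega)
  · exact absurd h2 (by rw [h.2.2]; omega)
  · exact h
  · exact absurd h2 (by rw [h.2.2]; omega)

end AugAux
namespace AugAux

lemma card_insert_erase {s : Finset (ℕ × ℕ)} {a b : ℕ × ℕ} (ha : a ∈ s) (hb : b ∉ s) :
    (insert b (s.erase a)).card = s.card := by
  rw [Finset.card_insert_of_notMem (fun h => hb (Finset.mem_of_mem_erase h)),
    Finset.card_erase_of_mem ha]
  have := Finset.card_pos.mpr ⟨a, ha⟩; omega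

lemma card_insert2_erase2 {s : Finset (ℕ × ℕ)} {a b c d : ℕ × ℕ} (ha : a ∈ s) (hb : b ∈ s)
    (hab : a ≠ b) (hc : c ∉ s) (hd : d ∉ s) (hcd : c ≠ d) :
    (insert c (insert d ((s.erase a).erase b))).card = s.card := by
  have h2 : 2 ≤ s.card := Finset.one_lt_card.mpr ⟨a, ha, b, hb, hab⟩
  have hbe : b ∈ (s.erase a) := Finset.mem_erase.mpr ⟨fun h => hab h.symm, hb⟩
  rw [Finset.card_insert_of_notMem, Finset.card_insert_of_notMem,
    Finset.card_erase_of_mem hbe, Finset.card_erase_of_mem ha]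
  · omega
  · exact fun h => hd (Finset.mem_of_mem_erase (Finset.mem_of_mem_erase h))
  · simp only [Finset.mem_insert]
    rintro (h | h)
    · exact hcd h
    · exact hc (Finset.mem_of_mem_erase (Finset.mem_of_mem_erase h))

end AugAux
namespace AugAux

open Net

lemma caseA {N N' : Net} {i j q p : ℕ}
    (hph : N.isPhylo) (hij : i ≠ j) (hj : N.isLeaf j)
    (hq : (q, j) ∈ N.A) (hiV : i ∉ N.V) (hpV : p ∉ N.V) (hpi : p ≠ i)
    (hV' : N'.V = insert i (insert p N.V))
    (hA' : N'.A = (N.A.erase (q, j)) ∪ {(q, p), (p, j), (p, i)}) :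
    ∀ x y : ℕ, x ≠ y →
      (N'.isCherry x y ↔
        ((N.isCherry x y ∧ x ≠ i ∧ x ≠ j ∧ y ≠ i ∧ y ≠ j) ∨
         (x, y) = (i, j) ∨ (x, y) = (j, i))) ∧
      (N'.isRetCherry x y ↔
        (N.isRetCherry x y ∧ x ≠ i ∧ x ≠ j ∧ y ≠ i ∧ y ≠ j)) := by
  -- basic facts
  have hqV : q ∈ N.V := (arc_mem_V hph hq).1
  have hjV : j ∈ N.V := hj.1
  have hqj : q ≠ j := arc_ne hph hq
  have hqp : q ≠ p := fun h => hpV (h ▸ hqV)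
  have hqi : q ≠ i := fun h => hiV (h ▸ hqV)
  have hpj : p ≠ j := fun h => hpV (h ▸ hjV)
  -- membership characterization
  have hmem : ∀ a : ℕ × ℕ, a ∈ N'.A ↔
      (a ∈ N.A ∧ a ≠ (q, j)) ∨ a = (q, p) ∨ a = (p, j) ∨ a = (p, i) := by
    intro a
    simp only [hA', Finset.mem_union, Finset.mem_erase, Finset.mem_insert,
      Finset.mem_singleton, ne_eq]
    tauto
  -- filters
  have hfj : N'.A.filter (fun a => a.2 = j) = {(p, j)} := by
    apply Finset.eq_singleton_iff_unique_mem.mpr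
    constructor
    · exact Finset.mem_filter.mpr ⟨(hmem (p, j)).mpr (Or.inr (Or.inr (Or.inl rfl))), rfl⟩
    · intro a ha
      obtain ⟨haA, ha2⟩ := Finset.mem_filter.mp ha
      rcases (hmem a).mp haA with ⟨h1, h2⟩ | h | h | h
      · exfalso
        apply h2
        have h3 : (a.1, a.2) ∈ N.A := h1
        rw [ha2] at h3
        have h4 := in_unique hj.2.1 hq h3
        calc a = (a.1, a.2) := rfl
          _ = (q, j) := by rw [ha2, h4]
      · exact absurd ((congrArg Prod.snd h).symm.trans ha2) hpj
      · exact h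
      · exact absurd ((congrArg Prod.snd h).symm.trans ha2) hij
  have hfi : N'.A.filter (fun a => a.2 = i) = {(p, i)} := by
    apply Finset.eq_singleton_iff_unique_mem.mpr
    constructor
    · exact Finset.mem_filter.mpr ⟨(hmem (p, i)).mpr (Or.inr (Or.inr (Or.inr rfl))), rfl⟩
    · intro a ha
      obtain ⟨haA, ha2⟩ := Finset.mem_filter.mp ha
      rcases (hmem a).mp haA with ⟨h1, h2⟩ | h | h | h
      · exfalso
        have h3 : (a.1, a.2) ∈ N.A := h1
        rw [ha2] at h3
        exact fresh_no_tgt hph hiV h3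
      · exact absurd ((congrArg Prod.snd h).symm.trans ha2) hpi
      · exact absurd (((congrArg Prod.snd h).symm.trans ha2).symm) hij
      · exact h
  have hfpin : N'.A.filter (fun a => a.2 = p) = {(q, p)} := by
    apply Finset.eq_singleton_iff_unique_mem.mpr
    constructor
    · exact Finset.mem_filter.mpr ⟨(hmem (q, p)).mpr (Or.inr (Or.inl rfl)), rfl⟩
    · intro a ha
      obtain ⟨haA, ha2⟩ := Finset.mem_filter.mp ha
      rcases (hmem a).mp haA with ⟨h1, h2⟩ | h | h | h
      · exfalso
        have h3 : (a.1, a.2) ∈ N.A := h1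
        rw [ha2] at h3
        exact fresh_no_tgt hph hpV h3
      · exact h
      · exact absurd (((congrArg Prod.snd h).symm.trans ha2).symm) hpj
      · exact absurd (((congrArg Prod.snd h).symm.trans ha2).symm) hpi
  have hfpout : N'.A.filter (fun a => a.1 = p) = {(p, j), (p, i)} := by
    ext a
    simp only [Finset.mem_filter, Finset.mem_insert, Finset.mem_singleton]
    constructor
    · rintro ⟨haA, ha1⟩
      rcases (hmem a).mp haA with ⟨h1, h2⟩ | h | h | h
      · exfalso
        have h3 : (a.1, a.2) ∈ N.A := h1
        rw [ha1] at h3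
        exact fresh_no_src hph hpV h3
      · exact absurd ((congrArg Prod.fst h).symm.trans ha1) hqp
      · exact Or.inl h
      · exact Or.inr h
    · rintro (rfl | rfl)
      · exact ⟨(hmem (p, j)).mpr (Or.inr (Or.inr (Or.inl rfl))), rfl⟩
      · exact ⟨(hmem (p, i)).mpr (Or.inr (Or.inr (Or.inr rfl))), rfl⟩
  have hfin : ∀ v, v ≠ p → v ≠ j → v ≠ i →
      N'.A.filter (fun a => a.2 = v) = N.A.filter (fun a => a.2 = v) := by
    intro v hvp hvj hvi
    ext a
    simp only [Finset.mem_filter]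
    constructor
    · rintro ⟨haA, ha2⟩
      refine ⟨?_, ha2⟩
      rcases (hmem a).mp haA with ⟨h1, -⟩ | h | h | h
      · exact h1
      · exact absurd ((congrArg Prod.snd h).symm.trans ha2) (fun hh => hvp hh.symm)
      · exact absurd ((congrArg Prod.snd h).symm.trans ha2) (fun hh => hvj hh.symm)
      · exact absurd ((congrArg Prod.snd h).symm.trans ha2) (fun hh => hvi hh.symm)
    · rintro ⟨haA, ha2⟩
      refine ⟨(hmem a).mpr (Or.inl ⟨haA, ?_⟩), ha2⟩
      intro hh
      exact hvj (by rw [← ha2, hh])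
  have hfout : ∀ v, v ≠ p → v ≠ q →
      N'.A.filter (fun a => a.1 = v) = N.A.filter (fun a => a.1 = v) := by
    intro v hvp hvq
    ext a
    simp only [Finset.mem_filter]
    constructor
    · rintro ⟨haA, ha1⟩
      refine ⟨?_, ha1⟩
      rcases (hmem a).mp haA with ⟨h1, -⟩ | h | h | h
      · exact h1
      · exact absurd ((congrArg Prod.fst h).symm.trans ha1) (fun hh => hvq hh.symm)
      · exact absurd ((congrArg Prod.fst h).symm.trans ha1) (fun hh => hvp hh.symm)
      · exact absurd ((congrArg Prod.fst h).symm.trans ha1) (fun hh => hvp hh.symm)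
    · rintro ⟨haA, ha1⟩
      refine ⟨(hmem a).mpr (Or.inl ⟨haA, ?_⟩), ha1⟩
      intro hh
      exact hvq (by rw [← ha1, hh])
  have hfqout : N'.A.filter (fun a => a.1 = q) =
      insert (q, p) ((N.A.filter (fun a => a.1 = q)).erase (q, j)) := by
    ext a
    simp only [Finset.mem_filter, Finset.mem_insert, Finset.mem_erase]
    constructor
    · rintro ⟨haA, ha1⟩
      rcases (hmem a).mp haA with ⟨h1, h2⟩ | h | h | h
      · exact Or.inr ⟨h2, h1, ha1⟩
      · exact Or.inl h
      · exact absurd ((congrArg Prod.fst h).symm.trans ha1) (fun hh => hqp hh.symm)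
      · exact absurd ((congrArg Prod.fst h).symm.trans ha1) (fun hh => hqp hh.symm)
    · rintro (rfl | ⟨h2, h1, ha1⟩)
      · exact ⟨(hmem (q, p)).mpr (Or.inr (Or.inl rfl)), rfl⟩
      · exact ⟨(hmem a).mpr (Or.inl ⟨h1, h2⟩), ha1⟩
  -- degrees of old nodes are preserved
  have hdeg : ∀ v ∈ N.V, N'.indeg v = N.indeg v ∧ N'.outdeg v = N.outdeg v := by
    intro v hv
    have hvp : v ≠ p := fun h => hpV (h ▸ hv)
    have hvi : v ≠ i := fun h => hiV (h ▸ hv)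
    constructor
    · by_cases hvj : v = j
      · subst hvj
        show (N'.A.filter (fun a => a.2 = v)).card = _
        rw [hfj, hj.2.1, Finset.card_singleton]
      · show (N'.A.filter _).card = (N.A.filter _).card
        rw [hfin v hvp hvj hvi]
    · by_cases hvq : v = q
      · subst hvq
        show (N'.A.filter (fun a => a.1 = v)).card = (N.A.filter (fun a => a.1 = v)).card
        rw [hfqout]
        exact card_insert_erase (by simp [Finset.mem_filter, hq])
          (by simp only [Finset.mem_filter]; rintro ⟨h, -⟩; exact fresh_no_tgt hph hpV h)
      · show (N'.A.filter _).card = (N.A.filter _).card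
        rw [hfout v hvp hvq]
  -- degrees of new nodes
  have hindeg_i : N'.indeg i = 1 := by
    show (N'.A.filter _).card = 1; rw [hfi, Finset.card_singleton]
  have hindeg_p : N'.indeg p = 1 := by
    show (N'.A.filter _).card = 1; rw [hfpin, Finset.card_singleton]
  have houtdeg_p : N'.outdeg p = 2 := by
    show (N'.A.filter _).card = 2
    rw [hfpout, Finset.card_insert_of_notMem, Finset.card_singleton]
    simp only [Finset.mem_singleton]
    intro h
    exact hij (congrArg Prod.snd h).symm
  have houtdeg_i : N'.outdeg i = 0 := by
    show (N'.A.filter (fun a => a.1 = i)).card = 0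
    rw [Finset.card_eq_zero, Finset.eq_empty_iff_forall_notMem]
    intro a ha
    obtain ⟨haA, ha1⟩ := Finset.mem_filter.mp ha
    rcases (hmem a).mp haA with ⟨h1, -⟩ | h | h | h
    · have h3 : (a.1, a.2) ∈ N.A := h1
      rw [ha1] at h3
      exact fresh_no_src hph hiV h3
    · exact hqi ((congrArg Prod.fst h).symm.trans ha1)
    · exact hpi ((congrArg Prod.fst h).symm.trans ha1)
    · exact hpi ((congrArg Prod.fst h).symm.trans ha1)
  have hiV' : i ∈ N'.V := by rw [hV']; simp
  have hpV' : p ∈ N'.V := by rw [hV']; simp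
  have hVsub : ∀ v ∈ N.V, v ∈ N'.V := by intro v hv; rw [hV']; simp [hv]
  -- node type transfer for old nodes
  have hleaf_iff : ∀ v ∈ N.V, (N'.isLeaf v ↔ N.isLeaf v) := by
    intro v hv
    simp [Net.isLeaf, hv, hVsub v hv, (hdeg v hv).1, (hdeg v hv).2]
  have hretic_iff : ∀ v ∈ N.V, (N'.isRetic v ↔ N.isRetic v) := by
    intro v hv
    simp [Net.isRetic, hv, hVsub v hv, (hdeg v hv).1, (hdeg v hv).2]
  have htree_iff : ∀ v ∈ N.V, (N'.isTreeNode v ↔ N.isTreeNode v) := by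
    intro v hv
    simp [Net.isTreeNode, hv, hVsub v hv, (hdeg v hv).1, (hdeg v hv).2]
  -- a leaf of N' is i or an old leaf
  have hleaf' : ∀ v, N'.isLeaf v → v = i ∨ (v ∈ N.V ∧ N.isLeaf v) := by
    intro v hv
    have hvV : v ∈ N'.V := hv.1
    rw [hV'] at hvV
    simp only [Finset.mem_insert] at hvV
    rcases hvV with rfl | rfl | hvV
    · exact Or.inl rfl
    · exact absurd hv.2.2 (by rw [houtdeg_p]; omega)
    · exact Or.inr ⟨hvV, (hleaf_iff v hvV).mp hv⟩
  -- parent/child structure around new arcs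
  have hpar_j : ∀ w, (w, j) ∈ N'.A → w = p := by
    intro w hw
    have h1 : (w, j) ∈ N'.A.filter (fun a => a.2 = j) := Finset.mem_filter.mpr ⟨hw, rfl⟩
    rw [hfj, Finset.mem_singleton] at h1
    exact congrArg Prod.fst h1
  have hpar_i : ∀ w, (w, i) ∈ N'.A → w = p := by
    intro w hw
    have h1 : (w, i) ∈ N'.A.filter (fun a => a.2 = i) := Finset.mem_filter.mpr ⟨hw, rfl⟩
    rw [hfi, Finset.mem_singleton] at h1
    exact congrArg Prod.fst h1
  have hchild_p : ∀ w, (p, w) ∈ N'.A → w = j ∨ w = i := by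
    intro w hw
    have h1 : (p, w) ∈ N'.A.filter (fun a => a.1 = p) := Finset.mem_filter.mpr ⟨hw, rfl⟩
    rw [hfpout] at h1
    simp only [Finset.mem_insert, Finset.mem_singleton] at h1
    rcases h1 with h | h
    · exact Or.inl (congrArg Prod.snd h)
    · exact Or.inr (congrArg Prod.snd h)
  have harc : ∀ w x : ℕ, x ≠ p → x ≠ j → x ≠ i → ((w, x) ∈ N'.A ↔ (w, x) ∈ N.A) := by
    intro w x hxp hxj hxi
    rw [hmem]
    constructor
    · rintro (⟨h1, -⟩ | h | h | h)
      · exact h1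
      · exact absurd (congrArg Prod.snd h) hxp
      · exact absurd (congrArg Prod.snd h) hxj
      · exact absurd (congrArg Prod.snd h) hxi
    · intro h1
      refine Or.inl ⟨h1, fun hh => hxj (congrArg Prod.snd hh)⟩
  have hleafN'i : N'.isLeaf i := ⟨hiV', hindeg_i, houtdeg_i⟩
  have hleafN'j : N'.isLeaf j :=
    ⟨hVsub j hjV, (hdeg j hjV).1.trans hj.2.1, (hdeg j hjV).2.trans hj.2.2⟩
  intro x y hxy
  constructor
  · -- cherry iff
    constructor
    · rintro ⟨-, hlx, hly, w, hwx, hwy⟩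
      by_cases hxi : x = i
      · have hwp := hpar_i w (hxi ▸ hwx)
        rcases hchild_p y (hwp ▸ hwy) with hy | hy
        · exact Or.inr (Or.inl (by rw [hxi, hy]))
        · exact absurd (hxi.trans hy.symm) hxy
      by_cases hxj : x = j
      · have hwp := hpar_j w (hxj ▸ hwx)
        rcases hchild_p y (hwp ▸ hwy) with hy | hy
        · exact absurd (hxj.trans hy.symm) hxy
        · exact Or.inr (Or.inr (by rw [hxj, hy]))
      by_cases hyi : y = i
      · have hwp := hpar_i w (hyi ▸ hwy)
        rcases hchild_p x (hwp ▸ hwx) with hx | hx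
        · exact absurd hx hxj
        · exact absurd hx hxi
      by_cases hyj : y = j
      · have hwp := hpar_j w (hyj ▸ hwy)
        rcases hchild_p x (hwp ▸ hwx) with hx | hx
        · exact absurd hx hxj
        · exact absurd hx hxi
      · -- transfer case
        rcases hleaf' x hlx with hx | ⟨hxV, hlxN⟩
        · exact absurd hx hxi
        rcases hleaf' y hly with hy | ⟨hyV, hlyN⟩
        · exact absurd hy hyi
        have hxp : x ≠ p := fun hh => hpV (hh ▸ hxV)
        have hyp : y ≠ p := fun hh => hpV (hh ▸ hyV)
        exact Or.inl ⟨⟨hxy, hlxN, hlyN, w, (harc w x hxp hxj hxi).mp hwx,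
          (harc w y hyp hyj hyi).mp hwy⟩, hxi, hxj, hyi, hyj⟩
    · rintro (⟨⟨-, hlx, hly, w, hwx, hwy⟩, hxi, hxj, hyi, hyj⟩ | heq | heq)
      · have hxV := hlx.1
        have hyV := hly.1
        have hxp : x ≠ p := fun hh => hpV (hh ▸ hxV)
        have hyp : y ≠ p := fun hh => hpV (hh ▸ hyV)
        exact ⟨hxy, (hleaf_iff x hxV).mpr hlx, (hleaf_iff y hyV).mpr hly, w,
          (harc w x hxp hxj hxi).mpr hwx, (harc w y hyp hyj hyi).mpr hwy⟩
      · have hx : x = i := congrArg Prod.fst heq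
        have hy : y = j := congrArg Prod.snd heq
        rw [hx, hy]
        exact ⟨hij, hleafN'i, hleafN'j, p,
          (hmem (p, i)).mpr (Or.inr (Or.inr (Or.inr rfl))),
          (hmem (p, j)).mpr (Or.inr (Or.inr (Or.inl rfl)))⟩
      · have hx : x = j := congrArg Prod.fst heq
        have hy : y = i := congrArg Prod.snd heq
        rw [hx, hy]
        exact ⟨fun hh => hij hh.symm, hleafN'j, hleafN'i, p,
          (hmem (p, j)).mpr (Or.inr (Or.inr (Or.inl rfl))),
          (hmem (p, i)).mpr (Or.inr (Or.inr (Or.inr rfl)))⟩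
  · -- reticulated cherry iff
    constructor
    · rintro ⟨-, hlx, hly, px, py, hpxx, hpyy, hret, htn, hpp⟩
      by_cases hxi : x = i
      · have hwp := hpar_i px (hxi ▸ hpxx)
        exact absurd (hwp ▸ hret).2.1 (by simp [hindeg_p])
      by_cases hxj : x = j
      · have hwp := hpar_j px (hxj ▸ hpxx)
        exact absurd (hwp ▸ hret).2.1 (by simp [hindeg_p])
      by_cases hyi : y = i
      · have hwp := hpar_i py (hyi ▸ hpyy)
        rcases hchild_p px (hwp ▸ hpp) with hx | hx
        · exact absurd (hx ▸ hret).2.1 (by simp [hleafN'j.2.1])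
        · exact absurd (hx ▸ hret).2.1 (by simp [hindeg_i])
      by_cases hyj : y = j
      · have hwp := hpar_j py (hyj ▸ hpyy)
        rcases hchild_p px (hwp ▸ hpp) with hx | hx
        · exact absurd (hx ▸ hret).2.1 (by simp [hleafN'j.2.1])
        · exact absurd (hx ▸ hret).2.1 (by simp [hindeg_i])
      · rcases hleaf' x hlx with hx | ⟨hxV, hlxN⟩
        · exact absurd hx hxi
        rcases hleaf' y hly with hy | ⟨hyV, hlyN⟩
        · exact absurd hy hyi
        have hxp : x ≠ p := fun hh => hpV (hh ▸ hxV)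
        have hyp : y ≠ p := fun hh => hpV (hh ▸ hyV)
        have hpxx' : (px, x) ∈ N.A := (harc px x hxp hxj hxi).mp hpxx
        have hpyy' : (py, y) ∈ N.A := (harc py y hyp hyj hyi).mp hpyy
        have hpxV : px ∈ N.V := (arc_mem_V hph hpxx').1
        have hpyV : py ∈ N.V := (arc_mem_V hph hpyy').1
        have hpxp : px ≠ p := fun hh => hpV (hh ▸ hpxV)
        have hpxi : px ≠ i := fun hh => hiV (hh ▸ hpxV)
        have hpxj : px ≠ j := fun hh =>
          absurd (hh ▸ hret).2.1 (by simp [hleafN'j.2.1])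
        have hpp' : (py, px) ∈ N.A := (harc py px hpxp hpxj hpxi).mp hpp
        exact ⟨⟨hxy, hlxN, hlyN, px, py, hpxx', hpyy', (hretic_iff px hpxV).mp hret,
          (htree_iff py hpyV).mp htn, hpp'⟩, hxi, hxj, hyi, hyj⟩
    · rintro ⟨⟨-, hlx, hly, px, py, hpxx, hpyy, hret, htn, hpp⟩, hxi, hxj, hyi, hyj⟩
      have hxV := hlx.1
      have hyV := hly.1
      have hpxV := hret.1
      have hpyV := htn.1
      have hxp : x ≠ p := fun hh => hpV (hh ▸ hxV)
      have hyp : y ≠ p := fun hh => hpV (hh ▸ hyV)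
      have hpxp : px ≠ p := fun hh => hpV (hh ▸ hpxV)
      have hpxi : px ≠ i := fun hh => hiV (hh ▸ hpxV)
      have hpxj : px ≠ j := fun hh =>
        absurd (hh ▸ hret).2.1 (by simp [hj.2.1])
      exact ⟨hxy, (hleaf_iff x hxV).mpr hlx, (hleaf_iff y hyV).mpr hly, px, py,
        (harc px x hxp hxj hxi).mpr hpxx, (harc py y hyp hyj hyi).mpr hpyy,
        (hretic_iff px hpxV).mpr hret, (htree_iff py hpyV).mpr htn,
        (harc py px hpxp hpxj hpxi).mpr hpp⟩

end AugAux
namespace AugAux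

open Net

set_option maxHeartbeats 2000000 in
lemma caseB {N N' : Net} {i j qi qj pi pj : ℕ}
    (hph : N.isPhylo) (hij : i ≠ j) (hj : N.isLeaf j) (hi : N.isLeaf i)
    (hqi : (qi, i) ∈ N.A) (hqj : (qj, j) ∈ N.A)
    (hpiV : pi ∉ N.V) (hpjV : pj ∉ N.V) (hpipj : pi ≠ pj)
    (hV' : N'.V = insert pi (insert pj N.V))
    (hA' : N'.A = ((N.A.erase (qi, i)).erase (qj, j)) ∪
      {(qi, pi), (pi, i), (qj, pj), (pj, j), (pj, pi)}) :
    ∀ x y : ℕ, x ≠ y →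
      (N'.isCherry x y ↔ (N.isCherry x y ∧ x ≠ i ∧ x ≠ j ∧ y ≠ i ∧ y ≠ j)) ∧
      (N'.isRetCherry x y ↔
        ((N.isRetCherry x y ∧ x ≠ i ∧ x ≠ j ∧ y ≠ i ∧ y ≠ j) ∨
         (N.isCherry x y ∧ x = i ∧ y ≠ j) ∨
         (x, y) = (i, j))) := by
  have hiV : i ∈ N.V := hi.1
  have hjV : j ∈ N.V := hj.1
  have hqiV : qi ∈ N.V := (arc_mem_V hph hqi).1
  have hqjV : qj ∈ N.V := (arc_mem_V hph hqj).1
  have hqii : qi ≠ i := arc_ne hph hqi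
  have hqjj : qj ≠ j := arc_ne hph hqj
  have hqij : qi ≠ j := fun h => no_out hj.2.2 (h ▸ hqi)
  have hqji : qj ≠ i := fun h => no_out hi.2.2 (h ▸ hqj)
  have hpii : pi ≠ i := fun h => hpiV (h ▸ hiV)
  have hpij : pi ≠ j := fun h => hpiV (h ▸ hjV)
  have hpji : pj ≠ i := fun h => hpjV (h ▸ hiV)
  have hpjj : pj ≠ j := fun h => hpjV (h ▸ hjV)
  have hpiqi : pi ≠ qi := fun h => hpiV (h ▸ hqiV)
  have hpiqj : pi ≠ qj := fun h => hpiV (h ▸ hqjV)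
  have hpjqi : pj ≠ qi := fun h => hpjV (h ▸ hqiV)
  have hpjqj : pj ≠ qj := fun h => hpjV (h ▸ hqjV)
  have hmem : ∀ a : ℕ × ℕ, a ∈ N'.A ↔
      (a ∈ N.A ∧ a ≠ (qi, i) ∧ a ≠ (qj, j)) ∨ a = (qi, pi) ∨ a = (pi, i) ∨
        a = (qj, pj) ∨ a = (pj, j) ∨ a = (pj, pi) := by
    intro a
    simp only [hA', Finset.mem_union, Finset.mem_erase, Finset.mem_insert,
      Finset.mem_singleton, ne_eq]
    tauto
  -- incoming filters
  have hfi : N'.A.filter (fun a => a.2 = i) = {(pi, i)} := by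
    apply Finset.eq_singleton_iff_unique_mem.mpr
    refine ⟨Finset.mem_filter.mpr ⟨(hmem (pi, i)).mpr (Or.inr (Or.inr (Or.inl rfl))), rfl⟩, ?_⟩
    intro a ha
    obtain ⟨haA, ha2⟩ := Finset.mem_filter.mp ha
    rcases (hmem a).mp haA with ⟨h1, hne1, -⟩ | h | h | h | h | h
    · exfalso
      apply hne1
      have h3 : (a.1, a.2) ∈ N.A := h1
      rw [ha2] at h3
      have h4 := in_unique hi.2.1 hqi h3
      calc a = (a.1, a.2) := rfl
        _ = (qi, i) := by rw [ha2, h4]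
    · exact absurd ((congrArg Prod.snd h).symm.trans ha2) hpii
    · exact h
    · exact absurd ((congrArg Prod.snd h).symm.trans ha2) hpji
    · exact absurd (((congrArg Prod.snd h).symm.trans ha2).symm) hij
    · exact absurd ((congrArg Prod.snd h).symm.trans ha2) hpii
  have hfj : N'.A.filter (fun a => a.2 = j) = {(pj, j)} := by
    apply Finset.eq_singleton_iff_unique_mem.mpr
    refine ⟨Finset.mem_filter.mpr ⟨(hmem (pj, j)).mpr (Or.inr (Or.inr (Or.inr (Or.inr (Or.inl rfl))))), rfl⟩, ?_⟩
    intro a ha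
    obtain ⟨haA, ha2⟩ := Finset.mem_filter.mp ha
    rcases (hmem a).mp haA with ⟨h1, -, hne2⟩ | h | h | h | h | h
    · exfalso
      apply hne2
      have h3 : (a.1, a.2) ∈ N.A := h1
      rw [ha2] at h3
      have h4 := in_unique hj.2.1 hqj h3
      calc a = (a.1, a.2) := rfl
        _ = (qj, j) := by rw [ha2, h4]
    · exact absurd ((congrArg Prod.snd h).symm.trans ha2) hpij
    · exact absurd ((congrArg Prod.snd h).symm.trans ha2) hij
    · exact absurd ((congrArg Prod.snd h).symm.trans ha2) hpjj
    · exact h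
    · exact absurd ((congrArg Prod.snd h).symm.trans ha2) hpij
  have hfpi_in : N'.A.filter (fun a => a.2 = pi) = {(qi, pi), (pj, pi)} := by
    ext a
    simp only [Finset.mem_filter, Finset.mem_insert, Finset.mem_singleton]
    constructor
    · rintro ⟨haA, ha2⟩
      rcases (hmem a).mp haA with ⟨h1, -, -⟩ | h | h | h | h | h
      · exfalso
        have h3 : (a.1, a.2) ∈ N.A := h1
        rw [ha2] at h3
        exact fresh_no_tgt hph hpiV h3
      · exact Or.inl h
      · exact absurd ((congrArg Prod.snd h).symm.trans ha2) (fun hh => hpii hh.symm)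
      · exact absurd ((congrArg Prod.snd h).symm.trans ha2) (fun hh => hpipj hh.symm)
      · exact absurd ((congrArg Prod.snd h).symm.trans ha2) (fun hh => hpij hh.symm)
      · exact Or.inr h
    · rintro (rfl | rfl)
      · exact ⟨(hmem (qi, pi)).mpr (Or.inr (Or.inl rfl)), rfl⟩
      · exact ⟨(hmem (pj, pi)).mpr (Or.inr (Or.inr (Or.inr (Or.inr (Or.inr rfl))))), rfl⟩
  have hfpj_in : N'.A.filter (fun a => a.2 = pj) = {(qj, pj)} := by
    apply Finset.eq_singleton_iff_unique_mem.mpr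
    refine ⟨Finset.mem_filter.mpr ⟨(hmem (qj, pj)).mpr (Or.inr (Or.inr (Or.inr (Or.inl rfl)))), rfl⟩, ?_⟩
    intro a ha
    obtain ⟨haA, ha2⟩ := Finset.mem_filter.mp ha
    rcases (hmem a).mp haA with ⟨h1, -, -⟩ | h | h | h | h | h
    · exfalso
      have h3 : (a.1, a.2) ∈ N.A := h1
      rw [ha2] at h3
      exact fresh_no_tgt hph hpjV h3
    · exact absurd ((congrArg Prod.snd h).symm.trans ha2) hpipj
    · exact absurd ((congrArg Prod.snd h).symm.trans ha2) (fun hh => hpji hh.symm)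
    · exact h
    · exact absurd ((congrArg Prod.snd h).symm.trans ha2) (fun hh => hpjj hh.symm)
    · exact absurd ((congrArg Prod.snd h).symm.trans ha2) hpipj
  have hfin : ∀ v, v ≠ pi → v ≠ pj → v ≠ i → v ≠ j →
      N'.A.filter (fun a => a.2 = v) = N.A.filter (fun a => a.2 = v) := by
    intro v hvpi hvpj hvi hvj
    ext a
    simp only [Finset.mem_filter]
    constructor
    · rintro ⟨haA, ha2⟩
      refine ⟨?_, ha2⟩
      rcases (hmem a).mp haA with ⟨h1, -, -⟩ | h | h | h | h | h
      · exact h1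
      · exact absurd ((congrArg Prod.snd h).symm.trans ha2) (fun hh => hvpi hh.symm)
      · exact absurd ((congrArg Prod.snd h).symm.trans ha2) (fun hh => hvi hh.symm)
      · exact absurd ((congrArg Prod.snd h).symm.trans ha2) (fun hh => hvpj hh.symm)
      · exact absurd ((congrArg Prod.snd h).symm.trans ha2) (fun hh => hvj hh.symm)
      · exact absurd ((congrArg Prod.snd h).symm.trans ha2) (fun hh => hvpi hh.symm)
    · rintro ⟨haA, ha2⟩
      refine ⟨(hmem a).mpr (Or.inl ⟨haA, ?_, ?_⟩), ha2⟩
      · intro hh; exact hvi (by rw [← ha2, hh])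
      · intro hh; exact hvj (by rw [← ha2, hh])
  -- outgoing filters
  have hfpi_out : N'.A.filter (fun a => a.1 = pi) = {(pi, i)} := by
    apply Finset.eq_singleton_iff_unique_mem.mpr
    refine ⟨Finset.mem_filter.mpr ⟨(hmem (pi, i)).mpr (Or.inr (Or.inr (Or.inl rfl))), rfl⟩, ?_⟩
    intro a ha
    obtain ⟨haA, ha1⟩ := Finset.mem_filter.mp ha
    rcases (hmem a).mp haA with ⟨h1, -, -⟩ | h | h | h | h | h
    · exfalso
      have h3 : (a.1, a.2) ∈ N.A := h1
      rw [ha1] at h3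
      exact fresh_no_src hph hpiV h3
    · exact absurd ((congrArg Prod.fst h).symm.trans ha1) (fun hh => hpiqi hh.symm)
    · exact h
    · exact absurd ((congrArg Prod.fst h).symm.trans ha1) (fun hh => hpiqj hh.symm)
    · exact absurd ((congrArg Prod.fst h).symm.trans ha1) (fun hh => hpipj hh.symm)
    · exact absurd ((congrArg Prod.fst h).symm.trans ha1) (fun hh => hpipj hh.symm)
  have hfpj_out : N'.A.filter (fun a => a.1 = pj) = {(pj, j), (pj, pi)} := by
    ext a
    simp only [Finset.mem_filter, Finset.mem_insert, Finset.mem_singleton]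
    constructor
    · rintro ⟨haA, ha1⟩
      rcases (hmem a).mp haA with ⟨h1, -, -⟩ | h | h | h | h | h
      · exfalso
        have h3 : (a.1, a.2) ∈ N.A := h1
        rw [ha1] at h3
        exact fresh_no_src hph hpjV h3
      · exact absurd ((congrArg Prod.fst h).symm.trans ha1) (fun hh => hpjqi hh.symm)
      · exact absurd ((congrArg Prod.fst h).symm.trans ha1) hpipj
      · exact absurd ((congrArg Prod.fst h).symm.trans ha1) (fun hh => hpjqj hh.symm)
      · exact Or.inl h
      · exact Or.inr h
    · rintro (rfl | rfl)
      · exact ⟨(hmem (pj, j)).mpr (Or.inr (Or.inr (Or.inr (Or.inr (Or.inl rfl))))), rfl⟩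
      · exact ⟨(hmem (pj, pi)).mpr (Or.inr (Or.inr (Or.inr (Or.inr (Or.inr rfl))))), rfl⟩
  have hfout : ∀ v, v ≠ pi → v ≠ pj → v ≠ qi → v ≠ qj →
      N'.A.filter (fun a => a.1 = v) = N.A.filter (fun a => a.1 = v) := by
    intro v hvpi hvpj hvqi hvqj
    ext a
    simp only [Finset.mem_filter]
    constructor
    · rintro ⟨haA, ha1⟩
      refine ⟨?_, ha1⟩
      rcases (hmem a).mp haA with ⟨h1, -, -⟩ | h | h | h | h | h
      · exact h1
      · exact absurd ((congrArg Prod.fst h).symm.trans ha1) (fun hh => hvqi hh.symm)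
      · exact absurd ((congrArg Prod.fst h).symm.trans ha1) (fun hh => hvpi hh.symm)
      · exact absurd ((congrArg Prod.fst h).symm.trans ha1) (fun hh => hvqj hh.symm)
      · exact absurd ((congrArg Prod.fst h).symm.trans ha1) (fun hh => hvpj hh.symm)
      · exact absurd ((congrArg Prod.fst h).symm.trans ha1) (fun hh => hvpj hh.symm)
    · rintro ⟨haA, ha1⟩
      refine ⟨(hmem a).mpr (Or.inl ⟨haA, ?_, ?_⟩), ha1⟩
      · intro hh; exact hvqi (by rw [← ha1, hh])
      · intro hh; exact hvqj (by rw [← ha1, hh])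
  -- outdegree of qi / qj is preserved
  have houtq : ∀ v ∈ N.V, N'.outdeg v = N.outdeg v := by
    intro v hv
    have hvpi : v ≠ pi := fun h => hpiV (h ▸ hv)
    have hvpj : v ≠ pj := fun h => hpjV (h ▸ hv)
    by_cases hvqi : v = qi
    · by_cases hqq : qi = qj
      · -- v = qi = qj
        have hset : N'.A.filter (fun a => a.1 = qi) =
            insert (qi, pi) (insert (qi, pj)
              (((N.A.filter (fun a => a.1 = qi)).erase (qi, i)).erase (qi, j))) := by
          ext a
          simp only [Finset.mem_filter, Finset.mem_insert, Finset.mem_erase]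
          constructor
          · rintro ⟨haA, ha1⟩
            rcases (hmem a).mp haA with ⟨h1, hne1, hne2⟩ | h | h | h | h | h
            · refine Or.inr (Or.inr ⟨?_, hne1, h1, ha1⟩)
              intro hh
              exact hne2 (by rw [hh, hqq])
            · exact Or.inl h
            · exact absurd ((congrArg Prod.fst h).symm.trans ha1) hpiqi
            · exact Or.inr (Or.inl (by rw [h, ← hqq]))
            · exact absurd ((congrArg Prod.fst h).symm.trans ha1) hpjqi
            · exact absurd ((congrArg Prod.fst h).symm.trans ha1) hpjqi
          · rintro (rfl | rfl | ⟨hnej, hnei, h1, ha1⟩)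
            · exact ⟨(hmem (qi, pi)).mpr (Or.inr (Or.inl rfl)), rfl⟩
            · refine ⟨(hmem (qi, pj)).mpr (Or.inr (Or.inr (Or.inr (Or.inl (by rw [hqq]))))), rfl⟩
            · refine ⟨(hmem a).mpr (Or.inl ⟨h1, hnei, ?_⟩), ha1⟩
              intro hh
              exact hnej (by rw [hh, hqq])
        show (N'.A.filter (fun a => a.1 = v)).card = (N.A.filter (fun a => a.1 = v)).card
        rw [hvqi, hset]
        refine card_insert2_erase2 ?_ ?_ ?_ ?_ ?_ ?_
        · exact Finset.mem_filter.mpr ⟨hqi, rfl⟩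
        · exact Finset.mem_filter.mpr ⟨by rw [hqq]; exact hqj, rfl⟩
        · intro h; exact hij (congrArg Prod.snd h)
        · intro h; exact fresh_no_tgt hph hpiV (Finset.mem_filter.mp h).1
        · intro h; exact fresh_no_tgt hph hpjV (Finset.mem_filter.mp h).1
        · intro h; exact hpipj (congrArg Prod.snd h)
      · -- v = qi ≠ qj
        have hset : N'.A.filter (fun a => a.1 = qi) =
            insert (qi, pi) ((N.A.filter (fun a => a.1 = qi)).erase (qi, i)) := by
          ext a
          simp only [Finset.mem_filter, Finset.mem_insert, Finset.mem_erase]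
          constructor
          · rintro ⟨haA, ha1⟩
            rcases (hmem a).mp haA with ⟨h1, hne1, -⟩ | h | h | h | h | h
            · exact Or.inr ⟨hne1, h1, ha1⟩
            · exact Or.inl h
            · exact absurd ((congrArg Prod.fst h).symm.trans ha1) hpiqi
            · exact absurd ((congrArg Prod.fst h).symm.trans ha1) (fun hh => hqq hh.symm)
            · exact absurd ((congrArg Prod.fst h).symm.trans ha1) hpjqi
            · exact absurd ((congrArg Prod.fst h).symm.trans ha1) hpjqi
          · rintro (rfl | ⟨hnei, h1, ha1⟩)
            · exact ⟨(hmem (qi, pi)).mpr (Or.inr (Or.inl rfl)), rfl⟩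
            · refine ⟨(hmem a).mpr (Or.inl ⟨h1, hnei, ?_⟩), ha1⟩
              intro hh
              exact hqq (by rw [← ha1, hh])
        show (N'.A.filter (fun a => a.1 = v)).card = (N.A.filter (fun a => a.1 = v)).card
        rw [hvqi, hset]
        exact card_insert_erase (Finset.mem_filter.mpr ⟨hqi, rfl⟩)
          (fun h => fresh_no_tgt hph hpiV (Finset.mem_filter.mp h).1)
    · by_cases hvqj : v = qj
      · -- v = qj ≠ qi
        have hqq : qj ≠ qi := fun h => hvqi (hvqj.trans h)
        have hset : N'.A.filter (fun a => a.1 = qj) =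
            insert (qj, pj) ((N.A.filter (fun a => a.1 = qj)).erase (qj, j)) := by
          ext a
          simp only [Finset.mem_filter, Finset.mem_insert, Finset.mem_erase]
          constructor
          · rintro ⟨haA, ha1⟩
            rcases (hmem a).mp haA with ⟨h1, -, hne2⟩ | h | h | h | h | h
            · exact Or.inr ⟨hne2, h1, ha1⟩
            · exact absurd ((congrArg Prod.fst h).symm.trans ha1) (fun hh => hqq hh.symm)
            · exact absurd ((congrArg Prod.fst h).symm.trans ha1) hpiqj
            · exact Or.inl h
            · exact absurd ((congrArg Prod.fst h).symm.trans ha1) hpjqj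
            · exact absurd ((congrArg Prod.fst h).symm.trans ha1) hpjqj
          · rintro (rfl | ⟨hnej, h1, ha1⟩)
            · exact ⟨(hmem (qj, pj)).mpr (Or.inr (Or.inr (Or.inr (Or.inl rfl)))), rfl⟩
            · refine ⟨(hmem a).mpr (Or.inl ⟨h1, ?_, hnej⟩), ha1⟩
              intro hh
              exact hqq (by rw [← ha1, hh])
        show (N'.A.filter (fun a => a.1 = v)).card = (N.A.filter (fun a => a.1 = v)).card
        rw [hvqj, hset]
        exact card_insert_erase (Finset.mem_filter.mpr ⟨hqj, rfl⟩)
          (fun h => fresh_no_tgt hph hpjV (Finset.mem_filter.mp h).1)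
      · show (N'.A.filter _).card = (N.A.filter _).card
        rw [hfout v hvpi hvpj hvqi hvqj]
  have hdeg : ∀ v ∈ N.V, N'.indeg v = N.indeg v ∧ N'.outdeg v = N.outdeg v := by
    intro v hv
    have hvpi : v ≠ pi := fun h => hpiV (h ▸ hv)
    have hvpj : v ≠ pj := fun h => hpjV (h ▸ hv)
    refine ⟨?_, houtq v hv⟩
    by_cases hvi : v = i
    · show (N'.A.filter (fun a => a.2 = v)).card = _
      rw [hvi, hfi, Finset.card_singleton, hi.2.1]
    · by_cases hvj : v = j
      · show (N'.A.filter (fun a => a.2 = v)).card = _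
        rw [hvj, hfj, Finset.card_singleton, hj.2.1]
      · show (N'.A.filter _).card = (N.A.filter _).card
        rw [hfin v hvpi hvpj hvi hvj]
  -- degrees of new nodes
  have hindeg_pi : N'.indeg pi = 2 := by
    show (N'.A.filter _).card = 2
    rw [hfpi_in, Finset.card_insert_of_notMem, Finset.card_singleton]
    simp only [Finset.mem_singleton]
    intro h
    exact hpjqi (congrArg Prod.fst h).symm
  have houtdeg_pi : N'.outdeg pi = 1 := by
    show (N'.A.filter _).card = 1; rw [hfpi_out, Finset.card_singleton]
  have hindeg_pj : N'.indeg pj = 1 := by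
    show (N'.A.filter _).card = 1; rw [hfpj_in, Finset.card_singleton]
  have houtdeg_pj : N'.outdeg pj = 2 := by
    show (N'.A.filter _).card = 2
    rw [hfpj_out, Finset.card_insert_of_notMem, Finset.card_singleton]
    simp only [Finset.mem_singleton]
    intro h
    exact hpij (congrArg Prod.snd h).symm
  have hpiV' : pi ∈ N'.V := by rw [hV']; simp
  have hpjV' : pj ∈ N'.V := by rw [hV']; simp
  have hVsub : ∀ v ∈ N.V, v ∈ N'.V := by intro v hv; rw [hV']; simp [hv]
  have hleaf_iff : ∀ v ∈ N.V, (N'.isLeaf v ↔ N.isLeaf v) := by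
    intro v hv
    simp [Net.isLeaf, hv, hVsub v hv, (hdeg v hv).1, (hdeg v hv).2]
  have hretic_iff : ∀ v ∈ N.V, (N'.isRetic v ↔ N.isRetic v) := by
    intro v hv
    simp [Net.isRetic, hv, hVsub v hv, (hdeg v hv).1, (hdeg v hv).2]
  have htree_iff : ∀ v ∈ N.V, (N'.isTreeNode v ↔ N.isTreeNode v) := by
    intro v hv
    simp [Net.isTreeNode, hv, hVsub v hv, (hdeg v hv).1, (hdeg v hv).2]
  have hleaf' : ∀ v, N'.isLeaf v → v ∈ N.V ∧ N.isLeaf v := by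
    intro v hv
    have hvV : v ∈ N'.V := hv.1
    rw [hV'] at hvV
    simp only [Finset.mem_insert] at hvV
    rcases hvV with rfl | rfl | hvV
    · exact absurd hv.2.2 (by rw [houtdeg_pi]; omega)
    · exact absurd hv.2.2 (by rw [houtdeg_pj]; omega)
    · exact ⟨hvV, (hleaf_iff v hvV).mp hv⟩
  -- parents and children of the special nodes in N'
  have hpar_i : ∀ w, (w, i) ∈ N'.A → w = pi := by
    intro w hw
    have h1 : (w, i) ∈ N'.A.filter (fun a => a.2 = i) := Finset.mem_filter.mpr ⟨hw, rfl⟩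
    rw [hfi, Finset.mem_singleton] at h1
    exact congrArg Prod.fst h1
  have hpar_j : ∀ w, (w, j) ∈ N'.A → w = pj := by
    intro w hw
    have h1 : (w, j) ∈ N'.A.filter (fun a => a.2 = j) := Finset.mem_filter.mpr ⟨hw, rfl⟩
    rw [hfj, Finset.mem_singleton] at h1
    exact congrArg Prod.fst h1
  have hpar_pi : ∀ w, (w, pi) ∈ N'.A → w = qi ∨ w = pj := by
    intro w hw
    have h1 : (w, pi) ∈ N'.A.filter (fun a => a.2 = pi) := Finset.mem_filter.mpr ⟨hw, rfl⟩
    rw [hfpi_in] at h1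
    simp only [Finset.mem_insert, Finset.mem_singleton] at h1
    rcases h1 with h | h
    · exact Or.inl (congrArg Prod.fst h)
    · exact Or.inr (congrArg Prod.fst h)
  have hchild_pi : ∀ w, (pi, w) ∈ N'.A → w = i := by
    intro w hw
    have h1 : (pi, w) ∈ N'.A.filter (fun a => a.1 = pi) := Finset.mem_filter.mpr ⟨hw, rfl⟩
    rw [hfpi_out, Finset.mem_singleton] at h1
    exact congrArg Prod.snd h1
  have hchild_pj : ∀ w, (pj, w) ∈ N'.A → w = j ∨ w = pi := by
    intro w hw
    have h1 : (pj, w) ∈ N'.A.filter (fun a => a.1 = pj) := Finset.mem_filter.mpr ⟨hw, rfl⟩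
    rw [hfpj_out] at h1
    simp only [Finset.mem_insert, Finset.mem_singleton] at h1
    rcases h1 with h | h
    · exact Or.inl (congrArg Prod.snd h)
    · exact Or.inr (congrArg Prod.snd h)
  have harc : ∀ w x : ℕ, x ≠ pi → x ≠ pj → x ≠ i → x ≠ j →
      ((w, x) ∈ N'.A ↔ (w, x) ∈ N.A) := by
    intro w x hxpi hxpj hxi hxj
    rw [hmem]
    constructor
    · rintro (⟨h1, -, -⟩ | h | h | h | h | h)
      · exact h1
      · exact absurd (congrArg Prod.snd h) hxpi
      · exact absurd (congrArg Prod.snd h) hxi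
      · exact absurd (congrArg Prod.snd h) hxpj
      · exact absurd (congrArg Prod.snd h) hxj
      · exact absurd (congrArg Prod.snd h) hxpi
    · intro h1
      refine Or.inl ⟨h1, fun hh => hxi (congrArg Prod.snd hh), fun hh => hxj (congrArg Prod.snd hh)⟩
  have harcqi : ∀ y, y ≠ pi → y ≠ pj → (qi, y) ∈ N'.A →
      ((qi, y) ∈ N.A ∧ y ≠ i ∧ y ≠ j) := by
    intro y hypi hypj hw
    rcases (hmem (qi, y)).mp hw with ⟨h1, hne1, hne2⟩ | h | h | h | h | h
    · refine ⟨h1, ?_, ?_⟩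
      · intro hh; exact hne1 (by rw [hh])
      · intro hh
        apply hne2
        have h3 : (qi, j) ∈ N.A := hh ▸ h1
        have h4 := in_unique hj.2.1 hqj h3
        rw [hh, h4]
    · exact absurd (congrArg Prod.snd h) hypi
    · exact absurd (congrArg Prod.fst h) (fun hh => hpiqi hh.symm)
    · exact absurd (congrArg Prod.snd h) hypj
    · exact absurd (congrArg Prod.fst h) (fun hh => hpjqi hh.symm)
    · exact absurd (congrArg Prod.fst h) (fun hh => hpjqi hh.symm)
  have hleafN'i : N'.isLeaf i :=
    ⟨hVsub i hiV, (hdeg i hiV).1.trans hi.2.1, (hdeg i hiV).2.trans hi.2.2⟩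
  have hleafN'j : N'.isLeaf j :=
    ⟨hVsub j hjV, (hdeg j hjV).1.trans hj.2.1, (hdeg j hjV).2.trans hj.2.2⟩
  have hretN'pi : N'.isRetic pi := ⟨hpiV', hindeg_pi, houtdeg_pi⟩
  have htreeN'pj : N'.isTreeNode pj := ⟨hpjV', hindeg_pj, houtdeg_pj⟩
  intro x y hxy
  constructor
  · -- cherry iff
    constructor
    · rintro ⟨-, hlx, hly, w, hwx, hwy⟩
      by_cases hxi : x = i
      · have hwp := hpar_i w (hxi ▸ hwx)
        have hy := hchild_pi y (hwp ▸ hwy)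
        exact absurd (hxi.trans hy.symm) hxy
      by_cases hxj : x = j
      · have hwp := hpar_j w (hxj ▸ hwx)
        rcases hchild_pj y (hwp ▸ hwy) with hy | hy
        · exact absurd (hxj.trans hy.symm) hxy
        · exact absurd (hy ▸ hly).2.2 (by simp [houtdeg_pi])
      by_cases hyi : y = i
      · have hwp := hpar_i w (hyi ▸ hwy)
        exact absurd (hchild_pi x (hwp ▸ hwx)) hxi
      by_cases hyj : y = j
      · have hwp := hpar_j w (hyj ▸ hwy)
        rcases hchild_pj x (hwp ▸ hwx) with hx | hx
        · exact absurd hx hxj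
        · exact absurd (hx ▸ hlx).2.2 (by simp [houtdeg_pi])
      · obtain ⟨hxV, hlxN⟩ := hleaf' x hlx
        obtain ⟨hyV, hlyN⟩ := hleaf' y hly
        have hxpi : x ≠ pi := fun hh => hpiV (hh ▸ hxV)
        have hxpj : x ≠ pj := fun hh => hpjV (hh ▸ hxV)
        have hypi : y ≠ pi := fun hh => hpiV (hh ▸ hyV)
        have hypj : y ≠ pj := fun hh => hpjV (hh ▸ hyV)
        exact ⟨⟨hxy, hlxN, hlyN, w, (harc w x hxpi hxpj hxi hxj).mp hwx,
          (harc w y hypi hypj hyi hyj).mp hwy⟩, hxi, hxj, hyi, hyj⟩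
    · rintro ⟨⟨-, hlx, hly, w, hwx, hwy⟩, hxi, hxj, hyi, hyj⟩
      have hxV := hlx.1
      have hyV := hly.1
      have hxpi : x ≠ pi := fun hh => hpiV (hh ▸ hxV)
      have hxpj : x ≠ pj := fun hh => hpjV (hh ▸ hxV)
      have hypi : y ≠ pi := fun hh => hpiV (hh ▸ hyV)
      have hypj : y ≠ pj := fun hh => hpjV (hh ▸ hyV)
      exact ⟨hxy, (hleaf_iff x hxV).mpr hlx, (hleaf_iff y hyV).mpr hly, w,
        (harc w x hxpi hxpj hxi hxj).mpr hwx, (harc w y hypi hypj hyi hyj).mpr hwy⟩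
  · -- reticulated cherry iff
    constructor
    · rintro ⟨-, hlx, hly, px, py, hpxx, hpyy, hret, htn, hpp⟩
      by_cases hxi : x = i
      · have hwp := hpar_i px (hxi ▸ hpxx)
        rcases hpar_pi py (hwp ▸ hpp) with hpy | hpy
        · -- py = qi : old cherry (i, y)
          obtain ⟨hyV, hlyN⟩ := hleaf' y hly
          have hypi : y ≠ pi := fun hh => hpiV (hh ▸ hyV)
          have hypj : y ≠ pj := fun hh => hpjV (hh ▸ hyV)
          obtain ⟨hqiy, hyi, hyj⟩ := harcqi y hypi hypj (hpy ▸ hpyy)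
          refine Or.inr (Or.inl ⟨?_, hxi, hyj⟩)
          rw [hxi]
          exact ⟨hxi ▸ hxy, hi, hlyN, qi, hqi, hqiy⟩
        · -- py = pj : y = j
          rcases hchild_pj y (hpy ▸ hpyy) with hy | hy
          · exact Or.inr (Or.inr (by rw [hxi, hy]))
          · exact absurd (hy ▸ hly).2.2 (by simp [houtdeg_pi])
      by_cases hxj : x = j
      · have hwp := hpar_j px (hxj ▸ hpxx)
        exact absurd (hwp ▸ hret).2.1 (by simp [hindeg_pj])
      by_cases hyi : y = i
      · have hwp := hpar_i py (hyi ▸ hpyy)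
        exact absurd (hwp ▸ htn).2.1 (by simp [hindeg_pi])
      by_cases hyj : y = j
      · have hwp := hpar_j py (hyj ▸ hpyy)
        rcases hchild_pj px (hwp ▸ hpp) with hx | hx
        · exact absurd (hx ▸ hret).2.1 (by simp [hleafN'j.2.1])
        · exact absurd (hchild_pi x (hx ▸ hpxx)) hxi
      · obtain ⟨hxV, hlxN⟩ := hleaf' x hlx
        obtain ⟨hyV, hlyN⟩ := hleaf' y hly
        have hxpi : x ≠ pi := fun hh => hpiV (hh ▸ hxV)
        have hxpj : x ≠ pj := fun hh => hpjV (hh ▸ hxV)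
        have hypi : y ≠ pi := fun hh => hpiV (hh ▸ hyV)
        have hypj : y ≠ pj := fun hh => hpjV (hh ▸ hyV)
        have hpxx' : (px, x) ∈ N.A := (harc px x hxpi hxpj hxi hxj).mp hpxx
        have hpyy' : (py, y) ∈ N.A := (harc py y hypi hypj hyi hyj).mp hpyy
        have hpxV : px ∈ N.V := (arc_mem_V hph hpxx').1
        have hpyV : py ∈ N.V := (arc_mem_V hph hpyy').1
        have hpxpi : px ≠ pi := fun hh => hpiV (hh ▸ hpxV)
        have hpxpj : px ≠ pj := fun hh => hpjV (hh ▸ hpxV)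
        have hpxi : px ≠ i := fun hh => absurd (hh ▸ hret).2.1 (by simp [hleafN'i.2.1])
        have hpxj : px ≠ j := fun hh => absurd (hh ▸ hret).2.1 (by simp [hleafN'j.2.1])
        have hpp' : (py, px) ∈ N.A := (harc py px hpxpi hpxpj hpxi hpxj).mp hpp
        exact Or.inl ⟨⟨hxy, hlxN, hlyN, px, py, hpxx', hpyy',
          (hretic_iff px hpxV).mp hret, (htree_iff py hpyV).mp htn, hpp'⟩,
          hxi, hxj, hyi, hyj⟩
    · rintro (⟨⟨-, hlx, hly, px, py, hpxx, hpyy, hret, htn, hpp⟩, hxi, hxj, hyi, hyj⟩ |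
        ⟨⟨-, hlx, hly, w, hwx, hwy⟩, hxi, hyj⟩ | heq)
      · have hxV := hlx.1
        have hyV := hly.1
        have hpxV := hret.1
        have hpyV := htn.1
        have hxpi : x ≠ pi := fun hh => hpiV (hh ▸ hxV)
        have hxpj : x ≠ pj := fun hh => hpjV (hh ▸ hxV)
        have hypi : y ≠ pi := fun hh => hpiV (hh ▸ hyV)
        have hypj : y ≠ pj := fun hh => hpjV (hh ▸ hyV)
        have hpxpi : px ≠ pi := fun hh => hpiV (hh ▸ hpxV)
        have hpxpj : px ≠ pj := fun hh => hpjV (hh ▸ hpxV)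
        have hpxi : px ≠ i := fun hh => absurd (hh ▸ hret).2.1 (by simp [hi.2.1])
        have hpxj : px ≠ j := fun hh => absurd (hh ▸ hret).2.1 (by simp [hj.2.1])
        exact ⟨hxy, (hleaf_iff x hxV).mpr hlx, (hleaf_iff y hyV).mpr hly, px, py,
          (harc px x hxpi hxpj hxi hxj).mpr hpxx, (harc py y hypi hypj hyi hyj).mpr hpyy,
          (hretic_iff px hpxV).mpr hret, (htree_iff py hpyV).mpr htn,
          (harc py px hpxpi hpxpj hpxi hpxj).mpr hpp⟩
      · -- old cherry (i, y) becomes a reticulated cherry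
        have hwx' : (w, i) ∈ N.A := hxi ▸ hwx
        have hwqi : w = qi := in_unique hi.2.1 hqi hwx'
        have hyV := hly.1
        have hyi : y ≠ i := fun hh => hxy (hxi.trans hh.symm)
        have hypi : y ≠ pi := fun hh => hpiV (hh ▸ hyV)
        have hypj : y ≠ pj := fun hh => hpjV (hh ▸ hyV)
        have hqiy : (qi, y) ∈ N.A := hwqi ▸ hwy
        have htnqi : N.isTreeNode qi := tree_of_two_children hph hqi hqiy (fun hh => hyi hh.symm)
        rw [hxi]
        refine ⟨hxi ▸ hxy, hleafN'i, (hleaf_iff y hyV).mpr hly, pi, qi,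
          (hmem (pi, i)).mpr (Or.inr (Or.inr (Or.inl rfl))), (harc qi y hypi hypj hyi hyj).mpr hqiy,
          hretN'pi, (htree_iff qi hqiV).mpr htnqi, (hmem (qi, pi)).mpr (Or.inr (Or.inl rfl))⟩
      · have hx : x = i := congrArg Prod.fst heq
        have hy : y = j := congrArg Prod.snd heq
        rw [hx, hy]
        exact ⟨hij, hleafN'i, hleafN'j, pi, pj, (hmem (pi, i)).mpr (Or.inr (Or.inr (Or.inl rfl))),
          (hmem (pj, j)).mpr (Or.inr (Or.inr (Or.inr (Or.inr (Or.inl rfl))))), hretN'pi, htreeN'pj,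
          (hmem (pj, pi)).mpr (Or.inr (Or.inr (Or.inr (Or.inr (Or.inr rfl)))))⟩

end AugAux
/-- How augmentation updates the annotated reducible pairs: for `N' = ^{(i,j)}N`,
a pair `(x,y)` of distinct integers is a cherry, resp. reticulated cherry, of
`N'` exactly in the cases listed in the statement. -/
theorem aug_updates_ARP (N N' : Net) (i j : ℕ)
    (h : N.isPhylo) (hij : i ≠ j) (hj : N.isLeaf j)
    (haug : Augments N (i, j) N') :
    ∀ x y : ℕ, x ≠ y →
      (N'.isCherry x y ↔
        ((N.isCherry x y ∧ x ≠ i ∧ x ≠ j ∧ y ≠ i ∧ y ≠ j) ∨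
         ((x, y) = (i, j) ∧ i ∉ N.leaves) ∨
         ((x, y) = (j, i) ∧ i ∉ N.leaves))) ∧
      (N'.isRetCherry x y ↔
        ((N.isRetCherry x y ∧ x ≠ i ∧ x ≠ j ∧ y ≠ i ∧ y ≠ j) ∨
         (N.isCherry x y ∧ x = i ∧ y ≠ j) ∨
         ((x, y) = (i, j) ∧ i ∈ N.leaves))) := by
  have hml : ∀ v, N.isLeaf v ↔ v ∈ N.leaves := by
    intro v
    simp [Net.leaves, Net.isLeaf, Finset.mem_filter]
  obtain ⟨-, -, hcase⟩ := haug
  rcases hcase with ⟨hiL, q, p, hq, hiV, hpV, hpi, hV', hA'⟩ |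
      ⟨hiL, qi, qj, pi, pj, hqi, hqj, hpiV, hpjV, hpipj, hV', hA'⟩
  · -- cherry augmentation, i is a new taxon
    intro x y hxy
    obtain ⟨hC, hR⟩ := AugAux.caseA h hij hj hq hiV hpV hpi hV' hA' x y hxy
    constructor
    · rw [hC]
      constructor
      · rintro (h1 | h1 | h1)
        · exact Or.inl h1
        · exact Or.inr (Or.inl ⟨h1, hiL⟩)
        · exact Or.inr (Or.inr ⟨h1, hiL⟩)
      · rintro (h1 | ⟨h1, -⟩ | ⟨h1, -⟩)
        · exact Or.inl h1
        · exact Or.inr (Or.inl h1)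
        · exact Or.inr (Or.inr h1)
    · rw [hR]
      constructor
      · exact fun h1 => Or.inl h1
      · rintro (h1 | ⟨h1, hxi, -⟩ | ⟨-, h1⟩)
        · exact h1
        · exact absurd ((hml i).mp (hxi ▸ h1.2.1)) hiL
        · exact absurd h1 hiL
  · -- reticulation augmentation, i is already a leaf
    have hi : N.isLeaf i := (hml i).mpr hiL
    intro x y hxy
    obtain ⟨hC, hR⟩ := AugAux.caseB h hij hj hi hqi hqj hpiV hpjV hpipj hV' hA' x y hxy
    constructor
    · rw [hC]
      constructor
      · exact fun h1 => Or.inl h1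
      · rintro (h1 | ⟨-, h1⟩ | ⟨-, h1⟩)
        · exact h1
        · exact absurd hiL h1
        · exact absurd hiL h1
    · rw [hR]
      constructor
      · rintro (h1 | h1 | h1)
        · exact Or.inl h1
        · exact Or.inr (Or.inl h1)
        · exact Or.inr (Or.inr ⟨h1, hiL⟩)
      · rintro (h1 | h1 | ⟨h1, -⟩)
        · exact Or.inl h1
        · exact Or.inr (Or.inl h1)
        · exact Or.inr (Or.inr h1)
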